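/- arXiv:1312.3401 — 2 statements merged into one kernel-verified Lean document; each statement's English description precedes it below -/
import Mathlib

section
/- The set of subtrees of a fixed tree has the Helly property: if a family of subtrees of a tree pairwise intersect (share a vertex), then there is a vertex common to all of them. -/
open SimpleGraph

namespace TWPaper

/-- `(T, B)` is a tree decomposition of `G`. -/
def IsTreeDecomp {V ι : Type*} (G : SimpleGraph V) (T : SimpleGraph ι) (B : ι → Set V) : Prop :=
  T.IsTree ∧
  (∀ v w : V, G.Adj v w → ∃ x, v ∈ B x ∧ w ∈ B x) ∧
  (∀ v : V, (T.induce {x | v ∈ B x}).Connected)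

/-- `G` has a tree decomposition of width at most `k`. -/
def HasTDWidthLE {V : Type*} (G : SimpleGraph V) (k : ℕ) : Prop :=
  ∃ (ι : Type) (T : SimpleGraph ι) (B : ι → Set V),
    IsTreeDecomp G T B ∧ ∀ x, (B x).ncard ≤ k + 1

/-- Treewidth of `G`. -/
noncomputable def treewidth {V : Type*} (G : SimpleGraph V) : ℕ :=
  sInf {k | HasTDWidthLE G k}

/-- Two vertex sets touch: they intersect or an edge joins them. -/
def Touches {V : Type*} (G : SimpleGraph V) (A B : Set V) : Prop :=
  (A ∩ B).Nonempty ∨ ∃ a ∈ A, ∃ b ∈ B, G.Adj a b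

/-- A bramble: a set of connected subgraphs (given by vertex sets) that pairwise touch. -/
def IsBramble {V : Type*} (G : SimpleGraph V) (𝓑 : Set (Set V)) : Prop :=
  (∀ A ∈ 𝓑, (G.induce A).Connected) ∧ ∀ A ∈ 𝓑, ∀ B ∈ 𝓑, Touches G A B

/-- `S` hits every element of `𝓑`. -/
def IsHitting {V : Type*} (𝓑 : Set (Set V)) (S : Set V) : Prop :=
  ∀ A ∈ 𝓑, (S ∩ A).Nonempty

/-- The order of a bramble: minimum size of a hitting set. -/
noncomputable def brambleOrder {V : Type*} (𝓑 : Set (Set V)) : ℕ :=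
  sInf {n | ∃ S : Set V, IsHitting 𝓑 S ∧ S.ncard = n}

/-- The bramble number: maximum order of a bramble. -/
noncomputable def brambleNumber {V : Type*} (G : SimpleGraph V) : ℕ :=
  sSup {n | ∃ 𝓑 : Set (Set V), IsBramble G 𝓑 ∧ brambleOrder 𝓑 = n}

/-- A tangle: connected subgraphs such that any three share a vertex or
meet a common edge's endpoints. -/
def IsTangle {V : Type*} (G : SimpleGraph V) (τ : Set (Set V)) : Prop :=
  (∀ A ∈ τ, (G.induce A).Connected) ∧
  ∀ A ∈ τ, ∀ B ∈ τ, ∀ C ∈ τ,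
    (∃ v, v ∈ A ∩ B ∩ C) ∨
    ∃ u v, G.Adj u v ∧ (u ∈ A ∨ v ∈ A) ∧ (u ∈ B ∨ v ∈ B) ∧ (u ∈ C ∨ v ∈ C)

/-- The tangle number: maximum order of a tangle. -/
noncomputable def tangleNumber {V : Type*} (G : SimpleGraph V) : ℕ :=
  sSup {n | ∃ τ : Set (Set V), IsTangle G τ ∧ brambleOrder τ = n}

/-- `G - X` : delete the vertices of `X` (kept on the same vertex type,
vertices of `X` become isolated). -/
def delVerts {V : Type*} (G : SimpleGraph V) (X : Set V) : SimpleGraph V where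
  Adj a b := G.Adj a b ∧ a ∉ X ∧ b ∉ X
  symm := by
    constructor
    intro a b h
    exact ⟨h.1.symm, h.2.2, h.2.1⟩
  loopless := by
    constructor
    intro a h
    exact G.irrefl h.1

/-- The vertex set of the component of `G - X` containing `v`. -/
def comp {V : Type*} (G : SimpleGraph V) (X : Set V) (v : V) : Set V :=
  {w | (delVerts G X).Reachable v w}

/-- `X` is a `(k, S, c)`-separator of `G`. -/
def IsSeparator {V : Type*} (G : SimpleGraph V) (k : ℕ) (S : Set V) (c : ℝ) (X : Set V) : Prop :=
  X.ncard ≤ k ∧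
  ∀ v ∉ X, ((comp G X v ∩ S).ncard : ℝ) ≤ c * ((S \ X).ncard : ℝ)

/-- The separation number `sep_c(G)`. -/
noncomputable def sepNum {V : Type*} (G : SimpleGraph V) (c : ℝ) : ℕ :=
  sInf {k | ∀ S : Set V, ∃ X : Set V, IsSeparator G k S c X}

/-- `X` is a `(k, S, c)*`-separator of `G`. -/
def IsStarSeparator {V : Type*} (G : SimpleGraph V) (k : ℕ) (S : Set V) (c : ℝ) (X : Set V) :
    Prop :=
  X.ncard ≤ k ∧
  ∀ v ∉ X, ((comp G X v ∩ (S \ X)).ncard : ℝ) ≤ c * (S.ncard : ℝ)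

/-- The variant separation number `sep*_c(G)`. -/
noncomputable def sepStarNum {V : Type*} (G : SimpleGraph V) (c : ℝ) : ℕ :=
  sInf {k | ∀ S : Set V, ∃ X : Set V, IsStarSeparator G k S c X}

/-- `G` has a branch decomposition of width at most `w`. -/
def HasBDWidthLE {V : Type*} (G : SimpleGraph V) (w : ℕ) : Prop :=
  ∃ (ι : Type) (_ : Finite ι) (T : SimpleGraph ι), T.IsTree ∧
    (∀ x : ι, (T.neighborSet x).ncard = 3 ∨ (T.neighborSet x).ncard = 1) ∧
    ∃ θ : G.edgeSet ≃ {x : ι // (T.neighborSet x).ncard = 1},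
      ∀ a b : ι, T.Adj a b →
        {v : V | ∃ e₁ e₂ : G.edgeSet, v ∈ e₁.1 ∧ v ∈ e₂.1 ∧
          ¬ (T.deleteEdges {s(a, b)}).Reachable (θ e₁).1 (θ e₂).1}.ncard ≤ w

/-- Branchwidth of `G` (`0` if no branch decomposition exists). -/
noncomputable def branchwidth {V : Type*} (G : SimpleGraph V) : ℕ :=
  sInf {w | HasBDWidthLE G w}

/-- `H` is a minor of `G`, via a model of branch sets. -/
def IsMinor {W V : Type*} (H : SimpleGraph W) (G : SimpleGraph V) : Prop :=
  ∃ f : W → Set V,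
    (∀ w, (G.induce (f w)).Connected) ∧
    (∀ a b, a ≠ b → Disjoint (f a) (f b)) ∧
    ∀ a b, H.Adj a b → ∃ u ∈ f a, ∃ v ∈ f b, G.Adj u v

/-- The lexicographic product `T[K_k]`. -/
def treeLex {ι : Type*} (T : SimpleGraph ι) (k : ℕ) : SimpleGraph (ι × Fin k) where
  Adj a b := T.Adj a.1 b.1 ∨ (a.1 = b.1 ∧ a.2 ≠ b.2)
  symm := by
    constructor
    rintro a b (h | ⟨h1, h2⟩)
    · exact Or.inl h.symm
    · exact Or.inr ⟨h1.symm, h2.symm⟩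
  loopless := by
    constructor
    rintro a (h | ⟨h1, h2⟩)
    · exact T.irrefl h
    · exact h2 rfl

/-- The lexicographic tree product number. -/
noncomputable def ltp {V : Type*} (G : SimpleGraph V) : ℕ :=
  sInf {k | ∃ (ι : Type) (T : SimpleGraph ι), T.IsTree ∧ IsMinor G (treeLex T k)}

/-- The cartesian tree product number. -/
noncomputable def ctp {V : Type*} (G : SimpleGraph V) : ℕ :=
  sInf {k | ∃ (ι : Type) (T : SimpleGraph ι), T.IsTree ∧
    IsMinor G (T.boxProd (completeGraph (Fin k)))}

/-- `S` is `k`-linked in `G`. -/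
def IsLinked {V : Type*} (G : SimpleGraph V) (k : ℕ) (S : Set V) : Prop :=
  ∀ X : Set V, X.ncard < k → ∃ v, v ∉ X ∧ S.ncard < 2 * (comp G X v ∩ S).ncard

/-- The linkedness of `G`: maximum `k ≥ 1` for which `G` has a `k`-linked set. -/
noncomputable def linkedness {V : Type*} (G : SimpleGraph V) : ℕ :=
  sSup {k | 0 < k ∧ ∃ S : Set V, IsLinked G k S}

/-- `S` is well-linked in `G`. -/
def WellLinked {V : Type*} (G : SimpleGraph V) (S : Set V) : Prop :=
  ∀ A B : Finset V, ↑A ⊆ S → ↑B ⊆ S → A.card = B.card →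
    ∃ (σ : A ≃ B) (p : ∀ a : A, G.Walk (a : V) ((σ a : V))),
      (∀ a, (p a).IsPath) ∧
      ∀ a a' : A, a ≠ a' → ∀ v, v ∈ (p a).support → v ∉ (p a').support

/-- `S` is externally-well-linked in `G`: the linking paths can be chosen with
no internal vertices in `S`. -/
def ExternallyWellLinked {V : Type*} (G : SimpleGraph V) (S : Set V) : Prop :=
  ∀ A B : Finset V, ↑A ⊆ S → ↑B ⊆ S → A.card = B.card →
    ∃ (σ : A ≃ B) (p : ∀ a : A, G.Walk (a : V) ((σ a : V))),
      (∀ a, (p a).IsPath) ∧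
      (∀ a a' : A, a ≠ a' → ∀ v, v ∈ (p a).support → v ∉ (p a').support) ∧
      ∀ a : A, ∀ v ∈ (p a).support, v ∈ S → v = (a : V) ∨ v = ((σ a : V))

/-- The well-linked number of `G`. -/
noncomputable def wellLinkedNum {V : Type*} (G : SimpleGraph V) : ℕ :=
  sSup {n | ∃ S : Set V, WellLinked G S ∧ S.ncard = n}

/-- A graph is chordal if every cycle of length at least 4 has a chord
(equivalently, there is no induced cycle of length at least four). -/
def Chordal {V : Type*} (H : SimpleGraph V) : Prop :=
  ∀ (v : V) (c : H.Walk v v), c.IsCycle → 4 ≤ c.length →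
    ∃ a b, a ∈ c.support ∧ b ∈ c.support ∧ H.Adj a b ∧ s(a, b) ∉ c.edges

/-- `G` is a `k`-tree. -/
inductive IsKTree (k : ℕ) : ∀ (V : Type), SimpleGraph V → Prop
  | base (V : Type) (G : SimpleGraph V) (h : Nonempty (G ≃g completeGraph (Fin (k + 1)))) :
      IsKTree k V G
  | step (V : Type) (G : SimpleGraph V) (v : V)
      (hdeg : (G.neighborSet v).ncard = k)
      (hcl : G.IsClique (G.neighborSet v))
      (h : IsKTree k ↥{u : V | u ≠ v} (G.induce {u : V | u ≠ v})) :
      IsKTree k V G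

/-- The `k × k` grid graph. -/
def grid (k : ℕ) : SimpleGraph (Fin k × Fin k) where
  Adj a b := (a.1 = b.1 ∧ (a.2.val + 1 = b.2.val ∨ b.2.val + 1 = a.2.val)) ∨
             (a.2 = b.2 ∧ (a.1.val + 1 = b.1.val ∨ b.1.val + 1 = a.1.val))
  symm := by
    constructor
    rintro a b (⟨h1, h2⟩ | ⟨h1, h2⟩)
    · exact Or.inl ⟨h1.symm, h2.symm⟩
    · exact Or.inr ⟨h1.symm, h2.symm⟩
  loopless := by
    constructor
    rintro a (⟨h1, h2⟩ | ⟨h1, h2⟩) <;> omega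

end TWPaper

/-! In a forest, a vertex set inducing a connected subgraph contains the unique path between
any two of its vertices. So two meeting subtrees meet in a subtree, and three pairwise meeting
subtrees `s, t, u` share a vertex: on a walk inside `s` from `c ∈ u ∩ s` to `a ∈ s ∩ t`, the
first vertex `m` in `t`, followed by a path inside `t` to `b ∈ t ∩ u`, is the path from `c` to
`b`, which lies in `u`. Adding the members of the family one at a time and intersecting them
into a running subtree then gives a common vertex. -/

namespace SimpleGraph

variable {V : Type*} {G : SimpleGraph V}

theorem Walk.IsPath.append {u v w : V} {p : G.Walk u v} {q : G.Walk v w}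
    (hp : p.IsPath) (hq : q.IsPath) (hpq : ∀ x ∈ p.support, x ∈ q.support → x = v) :
    (p.append q).IsPath := by
  rw [Walk.isPath_def, Walk.support_append]
  refine hp.support_nodup.append hq.support_nodup.tail fun x hxp hxq ↦ ?_
  obtain rfl := hpq x hxp (List.mem_of_mem_tail hxq)
  have := hq.support_nodup
  rw [← Walk.cons_tail_support, List.nodup_cons] at this
  exact this.1 hxq

theorem Walk.exists_walk_to_first_mem (S : Set V) {u v : V} (w : G.Walk u v)
    (hv : v ∈ S) :
    ∃ m ∈ S, ∃ q : G.Walk u m, q.support ⊆ w.support ∧ ∀ x ∈ q.support, x ∈ S → x = m := by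
  induction w with
  | nil => exact ⟨_, hv, .nil, by simp, by simp⟩
  | @cons u _ _ huu' w ih =>
    by_cases hu : u ∈ S
    · exact ⟨u, hu, .nil, by simp, by simp⟩
    obtain ⟨m, hm, q, hqw, hqS⟩ := ih hv
    refine ⟨m, hm, .cons huu' q, by simpa using List.subset_cons_of_subset _ hqw, ?_⟩
    rintro x hx hxS
    rcases (Walk.mem_support_iff _).1 hx with rfl | hx
    · exact absurd hxS hu
    · exact hqS x (by simpa using hx) hxS

theorem exists_isPath_of_connected_induce {s : Set V} (hs : (G.induce s).Connected)
    {a b : V} (ha : a ∈ s) (hb : b ∈ s) :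
    ∃ p : G.Walk a b, p.IsPath ∧ ∀ x ∈ p.support, x ∈ s := by
  classical
  obtain ⟨w⟩ := hs.preconnected ⟨a, ha⟩ ⟨b, hb⟩
  let w' : G.Walk a b := w.map (Embedding.induce s).toHom
  refine ⟨w'.bypass, w'.bypass_isPath, fun x hx ↦ ?_⟩
  have hx' : x ∈ (w.map (Embedding.induce s).toHom).support := w'.support_bypass_subset_support hx
  rw [Walk.support_map, List.mem_map] at hx'
  obtain ⟨⟨x, hxs⟩, -, rfl⟩ := hx'
  exact hxs

theorem IsAcyclic.support_subset_of_connected_induce (hG : G.IsAcyclic) {s : Set V}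
    (hs : (G.induce s).Connected) {a b : V} (ha : a ∈ s) (hb : b ∈ s) {p : G.Walk a b}
    (hp : p.IsPath) : ∀ x ∈ p.support, x ∈ s := by
  obtain ⟨q, hq, hqs⟩ := exists_isPath_of_connected_induce hs ha hb
  obtain rfl : p = q := congrArg Subtype.val ((hG.subsingleton_path a b).elim ⟨p, hp⟩ ⟨q, hq⟩)
  exact hqs

theorem IsAcyclic.connected_induce_inter (hG : G.IsAcyclic) {s t : Set V}
    (hs : (G.induce s).Connected) (ht : (G.induce t).Connected) (hst : (s ∩ t).Nonempty) :
    (G.induce (s ∩ t)).Connected := by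
  have : Nonempty ↥(s ∩ t) := hst.to_subtype
  refine ⟨fun ⟨a, has, hat⟩ ⟨b, hbs, hbt⟩ ↦ ?_⟩
  obtain ⟨p, hp, hps⟩ := exists_isPath_of_connected_induce hs has hbs
  have hpt := hG.support_subset_of_connected_induce ht hat hbt hp
  exact ⟨p.induce (s ∩ t) fun x hx ↦ ⟨hps x hx, hpt x hx⟩⟩

theorem IsAcyclic.inter_inter_nonempty (hG : G.IsAcyclic) {s t u : Set V}
    (hs : (G.induce s).Connected) (ht : (G.induce t).Connected) (hu : (G.induce u).Connected)
    (hst : (s ∩ t).Nonempty) (htu : (t ∩ u).Nonempty) (hus : (u ∩ s).Nonempty) :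
    (s ∩ t ∩ u).Nonempty := by
  classical
  obtain ⟨a, has, hat⟩ := hst
  obtain ⟨b, hbt, hbu⟩ := htu
  obtain ⟨c, hcu, hcs⟩ := hus
  obtain ⟨r, -, hrs⟩ := exists_isPath_of_connected_induce hs hcs has
  obtain ⟨m, hmt, q, hqr, hqt⟩ := r.exists_walk_to_first_mem t hat
  obtain ⟨p, hp, hpt⟩ := exists_isPath_of_connected_induce ht hmt hbt
  have hqp : (q.bypass.append p).IsPath :=
    q.bypass_isPath.append hp fun x hxq hxp ↦
      hqt x (q.support_bypass_subset_support hxq) (hpt x hxp)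
  refine ⟨m, ⟨hrs m (hqr q.end_mem_support), hmt⟩, ?_⟩
  exact hG.support_subset_of_connected_induce hu hcu hbu hqp m
    ((Walk.mem_support_append_iff _ _).2 (Or.inr p.start_mem_support))

/-- Relativized to a subtree `t` meeting every member, so that the induction step can replace
`t` by `t ∩ s`. -/
theorem IsAcyclic.exists_mem_of_pairwise_inter_nonempty (hG : G.IsAcyclic)
    {F : Set (Set V)} (hF : F.Finite) (hconn : ∀ s ∈ F, (G.induce s).Connected)
    (hpair : ∀ s ∈ F, ∀ t ∈ F, (s ∩ t).Nonempty) {t : Set V} (ht : (G.induce t).Connected)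
    (htF : ∀ s ∈ F, (t ∩ s).Nonempty) : ∃ x ∈ t, ∀ s ∈ F, x ∈ s := by
  induction F, hF using Set.Finite.induction_on generalizing t with
  | empty =>
    obtain ⟨⟨x, hx⟩⟩ := ht.nonempty
    exact ⟨x, hx, by simp⟩
  | @insert s F _ _ ih =>
    have hs := hconn s (.inl rfl)
    obtain ⟨x, ⟨hxt, hxs⟩, hxF⟩ := ih (fun u hu ↦ hconn u (.inr hu))
      (fun u hu v hv ↦ hpair u (.inr hu) v (.inr hv))
      (hG.connected_induce_inter ht hs (htF s (.inl rfl))) fun u hu ↦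
        hG.inter_inter_nonempty ht hs (hconn u (.inr hu)) (htF s (.inl rfl))
          (hpair s (.inl rfl) u (.inr hu)) (Set.inter_comm _ _ ▸ htF u (.inr hu))
    exact ⟨x, hxt, Set.forall_mem_insert.2 ⟨hxs, hxF⟩⟩

end SimpleGraph

namespace TWPaper

/-- Helly property of subtrees of a tree. -/
theorem helly_subtrees {ι : Type} [Fintype ι] (T : SimpleGraph ι) (hT : T.IsTree)
    (F : Set (Set ι))
    (hconn : ∀ s ∈ F, (T.induce s).Connected)
    (hpair : ∀ s ∈ F, ∀ t ∈ F, (s ∩ t).Nonempty) :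
    ∃ x : ι, ∀ s ∈ F, x ∈ s := by
  obtain ⟨x, -, hx⟩ := hT.isAcyclic.exists_mem_of_pairwise_inter_nonempty F.toFinite hconn
    hpair ((induceUnivIso T).connected_iff.2 hT.connected) fun s hs ↦ by
      simpa using Set.nonempty_coe_sort.1 (hconn s hs).nonempty
  exact ⟨x, hx⟩

end TWPaper
end

section
/- For every graph G, link(G) <= bn(G) <= 2·link(G). -/
/-! If `S` is `k`-linked, the components of the graphs `G - X` that hold a majority of `S`
pairwise meet, so they form a bramble; a set `X` of fewer than `k` vertices misses the majority
component of `G - X`, so this bramble has order at least `k`.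

Conversely, let `S` be a minimum hitting set of a bramble of order `m`, and let `2|X| < m`.
Some bramble element `A` avoids `X`, and every element avoiding `X` touches `A`, hence lies in
the component `C` of `G - X` containing `A`. So `X ∪ (C ∩ S)` is a hitting set, whence
`|C ∩ S| ≥ m - |X| > m / 2`: the set `S` is `⌈m/2⌉`-linked. -/

open SimpleGraph

namespace TWPaper

section Components

variable {V : Type*} {G : SimpleGraph V} {X A : Set V} {u v w : V}

lemma mem_comp_self (G : SimpleGraph V) (X : Set V) (v : V) : v ∈ comp G X v := Reachable.refl v

lemma comp_eq_supp (G : SimpleGraph V) (X : Set V) (v : V) :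
    comp G X v = ((delVerts G X).connectedComponentMk v).supp := by
  ext w
  rw [ConnectedComponent.mem_supp_iff, ConnectedComponent.eq]
  exact reachable_comm

lemma comp_connected (G : SimpleGraph V) (X : Set V) (v : V) :
    (G.induce (comp G X v)).Connected := by
  rw [comp_eq_supp]
  exact (ConnectedComponent.maximal_connected_induce_supp _).1.mono fun _ _ h => And.left h

lemma notMem_of_mem_comp (hv : v ∉ X) (hw : w ∈ comp G X v) : w ∉ X := by
  obtain ⟨p⟩ := hw
  induction p with
  | nil => exact hv
  | cons h _ ih => exact ih h.2.2

lemma subset_comp_of_connected (hA : (G.induce A).Connected) (hAX : Disjoint A X)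
    (hu : u ∈ A) (huv : u ∈ comp G X v) : A ⊆ comp G X v := by
  intro a ha
  let f : G.induce A →g delVerts G X :=
    ⟨Subtype.val, fun {b c} h => ⟨h, hAX.notMem_of_mem_left b.2, hAX.notMem_of_mem_left c.2⟩⟩
  exact huv.trans ((hA.preconnected ⟨u, hu⟩ ⟨a, ha⟩).map f)

lemma subset_comp_of_touches {B : Set V} (hB : (G.induce B).Connected) (hBX : Disjoint B X)
    (hAB : Touches G A B) (hv : v ∉ X) (hA : A ⊆ comp G X v) : B ⊆ comp G X v := by
  obtain ⟨b, hb, hbv⟩ : ∃ b ∈ B, b ∈ comp G X v := by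
    rcases hAB with ⟨x, hxA, hxB⟩ | ⟨a, ha, b, hb, hab⟩
    · exact ⟨x, hxB, hA hxA⟩
    · have hbX : b ∉ X := hBX.notMem_of_mem_left hb
      exact ⟨b, hb, (hA ha).trans (Adj.reachable ⟨hab, notMem_of_mem_comp hv (hA ha), hbX⟩)⟩
  exact subset_comp_of_connected hB hBX hb hbv

end Components

section Brambles

variable {V : Type*} {G : SimpleGraph V} {𝓑 : Set (Set V)} {S X A : Set V} {k n : ℕ} {v : V}

lemma brambleOrder_le_ncard (hS : IsHitting 𝓑 S) : brambleOrder 𝓑 ≤ S.ncard :=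
  Nat.sInf_le ⟨S, hS, rfl⟩

lemma brambleNumber_le (h : ∀ 𝓑, IsBramble G 𝓑 → brambleOrder 𝓑 ≤ n) : brambleNumber G ≤ n :=
  csSup_le' <| by
    rintro _ ⟨𝓑, h𝓑, rfl⟩
    exact h 𝓑 h𝓑

namespace IsBramble

lemma isHitting_univ (h𝓑 : IsBramble G 𝓑) : IsHitting 𝓑 Set.univ := fun A hA => by
  rw [Set.univ_inter]
  exact Set.nonempty_coe_sort.mp (h𝓑.1 A hA).nonempty

lemma exists_isHitting_ncard_eq (h𝓑 : IsBramble G 𝓑) :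
    ∃ S, IsHitting 𝓑 S ∧ S.ncard = brambleOrder 𝓑 :=
  Nat.sInf_mem (s := {n | ∃ S, IsHitting 𝓑 S ∧ S.ncard = n}) ⟨_, _, h𝓑.isHitting_univ, rfl⟩

lemma le_brambleOrder (h𝓑 : IsBramble G 𝓑) (h : ∀ S, IsHitting 𝓑 S → k ≤ S.ncard) :
    k ≤ brambleOrder 𝓑 := by
  obtain ⟨S, hS, hcard⟩ := h𝓑.exists_isHitting_ncard_eq
  exact hcard ▸ h S hS

lemma brambleOrder_le_brambleNumber [Finite V] (h𝓑 : IsBramble G 𝓑) :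
    brambleOrder 𝓑 ≤ brambleNumber G := by
  refine le_csSup ⟨Nat.card V, ?_⟩ ⟨𝓑, h𝓑, rfl⟩
  rintro _ ⟨𝓑', h𝓑', rfl⟩
  exact (brambleOrder_le_ncard h𝓑'.isHitting_univ).trans_eq (Set.ncard_univ V)

lemma isHitting_union_inter_comp (h𝓑 : IsBramble G 𝓑) (hS : IsHitting 𝓑 S) (hA : A ∈ 𝓑)
    (hAX : Disjoint A X) (hv : v ∈ A) : IsHitting 𝓑 (X ∪ (comp G X v ∩ S)) := by
  intro B hB
  by_cases hBX : Disjoint B X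
  · have hvX : v ∉ X := hAX.notMem_of_mem_left hv
    have hAv : A ⊆ comp G X v := subset_comp_of_connected (h𝓑.1 A hA) hAX hv (mem_comp_self G X v)
    have hBv : B ⊆ comp G X v := subset_comp_of_touches (h𝓑.1 B hB) hBX (h𝓑.2 A hA B hB) hvX hAv
    obtain ⟨s, hsS, hsB⟩ := hS B hB
    exact ⟨s, Or.inr ⟨hBv hsB, hsS⟩, hsB⟩
  · obtain ⟨x, hxB, hxX⟩ := Set.not_disjoint_iff.mp hBX
    exact ⟨x, Or.inl hxX, hxB⟩

lemma isLinked_of_isHitting [Finite V] (h𝓑 : IsBramble G 𝓑) (hS : IsHitting 𝓑 S)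
    (hcard : S.ncard = brambleOrder 𝓑) : IsLinked G ((brambleOrder 𝓑 + 1) / 2) S := by
  intro X hX
  have hXnot : ¬ IsHitting 𝓑 X := fun h => by
    have := brambleOrder_le_ncard h
    omega
  obtain ⟨A, hA, hAX⟩ : ∃ A ∈ 𝓑, Disjoint A X := by
    simpa [IsHitting, Set.not_nonempty_iff_eq_empty, Set.disjoint_iff_inter_eq_empty,
      Set.inter_comm] using hXnot
  obtain ⟨v, hv⟩ := Set.nonempty_coe_sort.mp (h𝓑.1 A hA).nonempty
  refine ⟨v, hAX.notMem_of_mem_left hv, ?_⟩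
  have hcut := brambleOrder_le_ncard (h𝓑.isHitting_union_inter_comp hS hA hAX hv)
  have hunion := Set.ncard_union_le X (comp G X v ∩ S)
  omega

end IsBramble

end Brambles

section Linkedness

variable {V : Type*} {G : SimpleGraph V} {S : Set V} {k n : ℕ}

lemma IsLinked.le_card [Finite V] (hS : IsLinked G k S) : k ≤ Nat.card V := by
  by_contra! hk
  obtain ⟨v, hv, -⟩ := hS Set.univ (by rwa [Set.ncard_univ])
  exact hv (Set.mem_univ v)

lemma le_linkedness [Finite V] (hk : 0 < k) (hS : IsLinked G k S) : k ≤ linkedness G := by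
  refine le_csSup ⟨Nat.card V, ?_⟩ ⟨hk, S, hS⟩
  rintro _ ⟨-, S', hS'⟩
  exact hS'.le_card

lemma linkedness_le (h : ∀ k S, IsLinked G k S → k ≤ n) : linkedness G ≤ n :=
  csSup_le' <| by
    rintro k ⟨-, S, hS⟩
    exact h k S hS

def majorityComponents (G : SimpleGraph V) (S : Set V) : Set (Set V) :=
  {A | ∃ X v, v ∉ X ∧ A = comp G X v ∧ S.ncard < 2 * (A ∩ S).ncard}

lemma inter_nonempty_of_majority (hS : S.Finite) {A B : Set V}
    (hA : S.ncard < 2 * (A ∩ S).ncard) (hB : S.ncard < 2 * (B ∩ S).ncard) : (A ∩ B).Nonempty := by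
  by_contra hAB
  have hdisj : Disjoint (A ∩ S) (B ∩ S) :=
    Set.disjoint_iff_inter_eq_empty.mpr <| Set.subset_empty_iff.mp fun x hx =>
      hAB ⟨x, hx.1.1, hx.2.1⟩
  have hunion := Set.ncard_union_eq hdisj (hS.subset Set.inter_subset_right)
    (hS.subset Set.inter_subset_right)
  have hsub : (A ∩ S ∪ B ∩ S).ncard ≤ S.ncard :=
    Set.ncard_le_ncard (Set.union_subset Set.inter_subset_right Set.inter_subset_right) hS
  omega

lemma isBramble_majorityComponents (hS : S.Finite) : IsBramble G (majorityComponents G S) := by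
  constructor
  · rintro _ ⟨X, v, -, rfl, -⟩
    exact comp_connected G X v
  · rintro A ⟨-, -, -, -, hA⟩ B ⟨-, -, -, -, hB⟩
    exact Or.inl (inter_nonempty_of_majority hS hA hB)

lemma IsLinked.le_brambleOrder_majorityComponents (hfin : S.Finite) (hS : IsLinked G k S) :
    k ≤ brambleOrder (majorityComponents G S) := by
  refine (isBramble_majorityComponents hfin).le_brambleOrder fun X hX => ?_
  by_contra! hk
  obtain ⟨v, hv, hbig⟩ := hS X hk
  obtain ⟨x, hxX, hxv⟩ := hX _ ⟨X, v, hv, rfl, hbig⟩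
  exact notMem_of_mem_comp hv hxv hxX

end Linkedness

/-- link(G) ≤ bn(G) ≤ 2·link(G). -/
theorem linkedness_bramble_bounds {V : Type} [Fintype V] (G : SimpleGraph V) :
    linkedness G ≤ brambleNumber G ∧ brambleNumber G ≤ 2 * linkedness G := by
  constructor
  · refine linkedness_le fun k S hS => ?_
    exact (hS.le_brambleOrder_majorityComponents S.toFinite).trans
      (isBramble_majorityComponents S.toFinite).brambleOrder_le_brambleNumber
  · refine brambleNumber_le fun 𝓑 h𝓑 => ?_
    obtain ⟨S, hS, hcard⟩ := h𝓑.exists_isHitting_ncard_eq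
    rcases Nat.eq_zero_or_pos (brambleOrder 𝓑) with h0 | hpos
    · omega
    · have := le_linkedness (by omega) (h𝓑.isLinked_of_isHitting hS hcard)
      omega

end TWPaper
end
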